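/- arXiv:2511.16968 — 8 statements merged into one kernel-verified Lean document; each statement's English description precedes it below -/
import Mathlib

section
/- In any orthomodular lattice, π_s(π_s(x,y), x^⊥)^⊥ = x ∧ y, where π_s is the Sasaki hook. -/
private lemma demorgan {A : Type*} [Lattice A] [BoundedOrder A] (c : A → A)
    (hanti : ∀ x y : A, x ≤ y → c y ≤ c x) (hinv : ∀ x : A, c (c x) = x)
    (a b : A) : c (a ⊔ b) = c a ⊓ c b := by
  apply le_antisymm
  · exact le_inf (hanti _ _ le_sup_left) (hanti _ _ le_sup_right)
  · have h : a ⊔ b ≤ c (c a ⊓ c b) := by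
      apply sup_le
      · have := hanti _ _ (inf_le_left (a := c a) (b := c b)); rwa [hinv] at this
      · have := hanti _ _ (inf_le_right (a := c a) (b := c b)); rwa [hinv] at this
    have := hanti _ _ h
    rwa [hinv] at this

private lemma meet_absorb {A : Type*} [Lattice A] [BoundedOrder A] (c : A → A)
    (hinf : ∀ x : A, x ⊓ c x = ⊥)
    (hanti : ∀ x y : A, x ≤ y → c y ≤ c x) (hinv : ∀ x : A, c (c x) = x)
    (hom : ∀ x y : A, x ≤ y → y = x ⊔ (c x ⊓ y))
    (x a : A) (ha : a ≤ x) : x ⊓ (c x ⊔ a) = a := by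
  set z := x ⊓ (c x ⊔ a) with hz
  have hyz : a ≤ z := le_inf ha le_sup_right
  have hcz : c z = c x ⊔ (x ⊓ c a) := by
    rw [hz]
    have : c (x ⊓ (c x ⊔ a)) = c (c (c x ⊔ c (c x ⊔ a))) := by
      rw [demorgan c hanti hinv, hinv, hinv]
    rw [this, hinv, demorgan c hanti hinv, hinv]
  have hbot : z ⊓ c a = ⊥ := by
    have h1 : z ⊓ c a ≤ c z := by
      rw [hcz]
      exact le_trans (inf_le_inf_right _ inf_le_left) le_sup_right
    have h2 : z ⊓ c a ≤ z ⊓ c z := le_inf inf_le_left h1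
    exact le_bot_iff.mp (le_trans h2 (le_of_eq (hinf z)))
  have := hom a z hyz
  rw [inf_comm] at this
  rw [this, hbot, sup_bot_eq]

/-- In any orthomodular lattice, `π_s(π_s(x,y), xᶜ)ᶜ = x ⊓ y`, where
`π_s(x,y) = xᶜ ⊔ (x ⊓ y)` is the Sasaki hook. -/
theorem sasaki_meet_identity {A : Type*} [Lattice A] [BoundedOrder A]
    (c : A → A)
    (hinf : ∀ x : A, x ⊓ c x = ⊥) (hsup : ∀ x : A, x ⊔ c x = ⊤)
    (hanti : ∀ x y : A, x ≤ y → c y ≤ c x) (hinv : ∀ x : A, c (c x) = x)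
    (hom : ∀ x y : A, x ≤ y → y = x ⊔ (c x ⊓ y)) :
    ∀ x y : A,
      c (c (c x ⊔ (x ⊓ y)) ⊔ ((c x ⊔ (x ⊓ y)) ⊓ c x)) = x ⊓ y := by
  intro x y
  set s := c x ⊔ (x ⊓ y) with hs
  have h1 : s ⊓ c x = c x := inf_eq_right.mpr le_sup_left
  rw [h1, demorgan c hanti hinv, hinv, hinv, inf_comm]
  exact meet_absorb c hinf hanti hinv hom x (x ⊓ y) inf_le_left
end

section
/- If A is an orthomodular lattice, then ⟨A; π_s⟩ with π_s(x,y) = x^⊥ ∨ (x ∧ y) is a quasi-implication algebra, i.e., it satisfies (x·y)·x = x, (x·y)·(x·z) = (y·x)·(y·z), and ((x·y)·(y·x))·x = ((y·x)·(x·y))·y. -/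
/-- If `A` is an orthomodular lattice, then `⟨A; π_s⟩` with
`π_s(x,y) = xᶜ ⊔ (x ⊓ y)` is a quasi-implication algebra. -/
theorem oml_sasaki_is_quasi_implication_algebra {A : Type*} [Lattice A] [BoundedOrder A]
    (c : A → A)
    (hinf : ∀ x : A, x ⊓ c x = ⊥) (hsup : ∀ x : A, x ⊔ c x = ⊤)
    (hanti : ∀ x y : A, x ≤ y → c y ≤ c x) (hinv : ∀ x : A, c (c x) = x)
    (hom : ∀ x y : A, x ≤ y → y = x ⊔ (c x ⊓ y)) :
    ∀ s : A → A → A, (∀ x y : A, s x y = c x ⊔ (x ⊓ y)) →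
      (∀ x y : A, s (s x y) x = x) ∧
      (∀ x y z : A, s (s x y) (s x z) = s (s y x) (s y z)) ∧
      (∀ x y : A, s (s (s x y) (s y x)) x = s (s (s y x) (s x y)) y) := by
  intro s hs
  -- De Morgan laws
  have dmsup : ∀ a b : A, c (a ⊔ b) = c a ⊓ c b := by
    intro a b
    apply le_antisymm
    · exact le_inf (hanti a (a ⊔ b) le_sup_left) (hanti b (a ⊔ b) le_sup_right)
    · have h1 : a ≤ c (c a ⊓ c b) := by
        have := hanti (c a ⊓ c b) (c a) inf_le_left; rwa [hinv] at this
      have h2 : b ≤ c (c a ⊓ c b) := by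
        have := hanti (c a ⊓ c b) (c b) inf_le_right; rwa [hinv] at this
      have := hanti (a ⊔ b) (c (c a ⊓ c b)) (sup_le h1 h2)
      rwa [hinv] at this
  have dminf : ∀ a b : A, c (a ⊓ b) = c a ⊔ c b := by
    intro a b
    have h := dmsup (c a) (c b)
    rw [hinv, hinv] at h
    rw [← h, hinv]
  -- dual orthomodular law
  have dualom : ∀ x b : A, b ≤ x → x ⊓ (c x ⊔ b) = b := by
    intro x b hbx
    have h2 := hom (c x) (c b) (hanti b x hbx)
    have h3 := congrArg c h2
    simp only [dmsup, dminf, hinv] at h3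
    exact h3.symm
  -- restricted distributivity
  have distr : ∀ p f g : A, f ≤ c p → g ≤ c p →
      (p ⊔ f) ⊓ (p ⊔ g) = p ⊔ f ⊓ g := by
    intro p f g hf hg
    apply le_antisymm
    · set w := (p ⊔ f) ⊓ (p ⊔ g) with hw
      have hpw : p ≤ w := le_inf le_sup_left le_sup_left
      have hw2 := hom p w hpw
      have hf' : c p ⊓ w ≤ f := by
        have h : c p ⊓ (p ⊔ f) = f := by
          have := dualom (c p) f hf; rwa [hinv] at this
        calc c p ⊓ w ≤ c p ⊓ (p ⊔ f) := inf_le_inf_left _ inf_le_left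
          _ = f := h
      have hg' : c p ⊓ w ≤ g := by
        have h : c p ⊓ (p ⊔ g) = g := by
          have := dualom (c p) g hg; rwa [hinv] at this
        calc c p ⊓ w ≤ c p ⊓ (p ⊔ g) := inf_le_inf_left _ inf_le_right
          _ = g := h
      calc w = p ⊔ (c p ⊓ w) := hw2
        _ ≤ p ⊔ f ⊓ g := sup_le_sup_left (le_inf hf' hg') p
    · exact le_inf (sup_le_sup_left inf_le_left p) (sup_le_sup_left inf_le_right p)
  -- x = (x ⊓ c(x⊓y)) ⊔ (x⊓y)
  have omx : ∀ x y : A, x ⊓ c (x ⊓ y) ⊔ x ⊓ y = x := by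
    intro x y
    have h := hom (x ⊓ y) x inf_le_left
    rw [inf_comm x (c (x ⊓ y)), sup_comm]
    exact h.symm
  -- x ⊔ (cx ⊓ (x ⊔ y)) = x ⊔ y
  have omj : ∀ x y : A, c x ⊓ (x ⊔ y) ⊔ x = x ⊔ y := by
    intro x y
    rw [sup_comm]
    exact (hom x (x ⊔ y) le_sup_left).symm
  -- complement of s x y
  have hca : ∀ x y : A, c (s x y) = x ⊓ c (x ⊓ y) := by
    intro x y
    rw [hs, dmsup, hinv]
  -- Axiom 1
  have ax1 : ∀ x y : A, s (s x y) x = x := by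
    intro x y
    have hax : s x y ⊓ x = x ⊓ y := by
      rw [hs, inf_comm, dualom x (x ⊓ y) inf_le_left]
    rw [hs, hca, hax]
    exact omx x y
  -- Axiom 2 via normal form
  have form2 : ∀ x y z : A, s (s x y) (s x z) = c (x ⊓ y) ⊔ x ⊓ y ⊓ z := by
    intro x y z
    have hab : s x y ⊓ s x z = c x ⊔ (x ⊓ y) ⊓ (x ⊓ z) := by
      rw [hs, hs]
      exact distr (c x) (x ⊓ y) (x ⊓ z)
        (by rw [hinv]; exact inf_le_left) (by rw [hinv]; exact inf_le_left)
    have hyz : (x ⊓ y) ⊓ (x ⊓ z) = x ⊓ y ⊓ z := by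
      simp [inf_comm, inf_left_comm, inf_assoc]
    have hcm : c x ⊔ x ⊓ c (x ⊓ y) = c (x ⊓ y) := by
      have h := hom (c x) (c (x ⊓ y)) (hanti (x ⊓ y) x inf_le_left)
      rw [hinv] at h
      exact h.symm
    rw [hs, hca, hab, hyz, ← sup_assoc, sup_comm (x ⊓ c (x ⊓ y)) (c x), hcm]
  -- Axiom 3 via normal form
  have form3 : ∀ x y : A, s (s x y) (s y x) = x ⊔ c x ⊓ c y := by
    intro x y
    have hab : s x y ⊓ s y x = x ⊓ y ⊔ c x ⊓ c y := by
      rw [hs, hs, sup_comm (c x) (x ⊓ y), sup_comm (c y) (y ⊓ x), inf_comm y x]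
      exact distr (x ⊓ y) (c x) (c y)
        (hanti (x ⊓ y) x inf_le_left) (hanti (x ⊓ y) y inf_le_right)
    rw [hs, hca, hab, ← sup_assoc, omx]
  refine ⟨ax1, ?_, ?_⟩
  · intro x y z
    rw [form2, form2, inf_comm y x]
  · intro x y
    rw [form3 x y, form3 y x, hs, hs]
    have hd1 : (x ⊔ c x ⊓ c y) ⊓ x = x := inf_eq_right.mpr le_sup_left
    have hd2 : (y ⊔ c y ⊓ c x) ⊓ y = y := inf_eq_right.mpr le_sup_left
    have hc1 : c (x ⊔ c x ⊓ c y) = c x ⊓ (x ⊔ y) := by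
      rw [dmsup, dminf, hinv, hinv]
    have hc2 : c (y ⊔ c y ⊓ c x) = c y ⊓ (y ⊔ x) := by
      rw [dmsup, dminf, hinv, hinv]
    rw [hd1, hd2, hc1, hc2, omj, omj, sup_comm x y]
end

section
/- Every quasi-implication algebra satisfies the exchange-like law (x·y)·(x·z) = x·((x·y)·z). -/
/-- Every quasi-implication algebra satisfies `(x·y)·(x·z) = x·((x·y)·z)`. -/
theorem qia_exchange_like {A : Type*} (op : A → A → A)
    (q1 : ∀ x y : A, op (op x y) x = x)
    (q2 : ∀ x y z : A, op (op x y) (op x z) = op (op y x) (op y z))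
    (q3 : ∀ x y : A, op (op (op x y) (op y x)) x = op (op (op y x) (op x y)) y) :
    ∀ x y z : A, op (op x y) (op x z) = op x (op (op x y) z) := by
  have L3 : ∀ a0 a1 : A, (op a0 (op a0 a1)) = (op a0 a1) := fun a0 a1 => (Eq.trans (((q1 (op a0 a1) a0).symm)) (congrArg (fun _t => op _t (op a0 a1)) (q1 a0 a1))).symm
  have L63 : ∀ a0 a1 a2 : A, (op (op a0 (op a0 a1)) (op a0 a2)) = (op a0 (op (op a0 a1) a2)) := fun a0 a1 a2 => Eq.trans (((q2 (op a0 a1) a0 a2).symm)) (congrArg (fun _t => op _t (op (op a0 a1) a2)) (q1 a0 a1))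
  have L848 : ∀ a0 a1 a2 : A, (op (op a0 a1) (op a0 a2)) = (op a0 (op (op a0 a1) a2)) := fun a0 a1 a2 => (Eq.trans (((L63 a0 a1 a2).symm)) (congrArg (fun _t => op _t (op a0 a2)) (L3 a0 a1))).symm
  exact fun x y z => L848 x y z
end

section
/- In any quasi-implication algebra, the relation x ⪯ y defined by x·y = 1 (where 1 := x·x) is a partial order. -/
/-- In any quasi-implication algebra, the relation `x ⪯ y ↔ x·y = 1`
(where `1 := x·x`) is a partial order: reflexive, antisymmetric and transitive. -/
theorem qia_partial_order {A : Type*} (op : A → A → A)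
    (q1 : ∀ x y : A, op (op x y) x = x)
    (q2 : ∀ x y z : A, op (op x y) (op x z) = op (op y x) (op y z))
    (q3 : ∀ x y : A, op (op (op x y) (op y x)) x = op (op (op y x) (op x y)) y) :
    ∀ r : A → A → Prop, (∀ x y : A, r x y ↔ op x y = op x x) →
      (∀ x : A, r x x) ∧
      (∀ x y : A, r x y → r y x → x = y) ∧
      (∀ x y z : A, r x y → r y z → r x z) := by
  intro r hr
  -- L1 : x·(x·y) = x·y
  have L1 : ∀ x y : A, op x (op x y) = op x y := by
    intro x y
    have h := q1 (op x y) x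
    rwa [q1 x y] at h
  -- Lstar : (x·y)·(x·z) = x·((x·y)·z)
  have Lstar : ∀ x y z : A, op (op x y) (op x z) = op x (op (op x y) z) := by
    intro x y z
    have h := q2 (op x y) x z
    rw [q1 x y, L1 x y] at h
    exact h.symm
  -- LA : (x·y)·(x·y) = y·y
  have LA : ∀ x y : A, op (op x y) (op x y) = op y y := by
    intro x y
    have h := q2 y x y
    have h2 := Lstar y x y
    rw [q1 y x] at h2
    rw [h2] at h
    exact h.symm
  -- L3 : x·y = x·x → x·x = y·y
  have L3 : ∀ x y : A, op x y = op x x → op x x = op y y := by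
    intro x y h
    have hA := LA x y
    rw [h] at hA
    rw [← hA, LA x x]
  -- antisymmetry
  have anti : ∀ x y : A, op x y = op x x → op y x = op y y → x = y := by
    intro x y h1 h2
    have e : op x x = op y y := L3 x y h1
    have h3 := q3 x y
    rw [h1, h2, ← e, LA x x, q1 x x] at h3
    rw [e, q1 y y] at h3
    exact h3
  -- transitivity
  have trans : ∀ x y z : A, op x y = op x x → op y z = op y y → op x z = op x x := by
    intro x y z h1 h2
    have e1 : op x x = op y y := L3 x y h1
    have e2 : op y y = op z z := L3 y z h2
    have hC : op (op x x) (op x z) = op x x := by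
      have h := q2 x y z
      rw [h1, h2] at h
      have h2' := Lstar y x y
      rw [q1 y x] at h2'
      rw [h2'] at h
      rw [h, e1]
    have hD : op (op x z) (op x x) = op (op x z) (op x z) := by
      have hA := LA x z
      rw [e1, e2, ← hA]
      exact L1 (op x z) (op x z)
    have hC' : op (op x x) (op x z) = op (op x x) (op x x) := by
      rw [hC, LA x x]
    exact anti (op x z) (op x x) hD hC'
  exact ⟨fun x => (hr x x).mpr rfl,
    fun x y hxy hyx => anti x y ((hr x y).mp hxy) ((hr y x).mp hyx),
    fun x y z hxy hyz => (hr x z).mpr (trans x y z ((hr x y).mp hxy) ((hr y z).mp hyz))⟩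
end

section
/- In any quasi-implication algebra, if y·z = 1 then (x·y)·(x·z) = 1; i.e., the operation x·(−) is monotone with respect to the induced partial order. -/
/-- In any quasi-implication algebra, if `y·z = 1` then `(x·y)·(x·z) = 1`. -/
theorem qia_left_monotone {A : Type*} (op : A → A → A)
    (q1 : ∀ x y : A, op (op x y) x = x)
    (q2 : ∀ x y z : A, op (op x y) (op x z) = op (op y x) (op y z))
    (q3 : ∀ x y : A, op (op (op x y) (op y x)) x = op (op (op y x) (op x y)) y) :
    ∀ x y z : A, op y z = op z z →
      op (op x y) (op x z) = op (op x y) (op x y) := by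
  -- L1 : x·(x·y) = x·y
  have L1 : ∀ x y : A, op x (op x y) = op x y := by
    intro x y
    have h := q1 (op x y) x
    rwa [q1 x y] at h
  -- L3 : (x·y)·(x·c) = x·((x·y)·c)
  have L3 : ∀ x y c : A, op (op x y) (op x c) = op x (op (op x y) c) := by
    intro x y c
    have h := q2 x (op x y) c
    rwa [L1 x y, q1 x y] at h
  -- L4 : (x·y)·(x·x) = x·x
  have L4 : ∀ x y : A, op (op x y) (op x x) = op x x := by
    intro x y
    have h := L3 x y x
    rwa [q1 x y] at h
  -- I : (y·x)·(y·x) = x·x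
  have I : ∀ x y : A, op (op y x) (op y x) = op x x := by
    intro x y
    have h := q2 x y x
    rw [L4 x y] at h
    exact h.symm
  -- constancy : a·a = b·b
  have C : ∀ a b : A, op a a = op b b := by
    intro a b
    have h := q3 a b
    have ha := I a (op (op a b) (op b a))
    have hb := I b (op (op b a) (op a b))
    rw [h] at ha
    rw [ha] at hb
    exact hb
  intro x y z h
  calc op (op x y) (op x z) = op (op y x) (op y z) := q2 x y z
    _ = op (op y x) (op (op y x) (op y x)) := by rw [h, C z (op y x)]
    _ = op (op y x) (op y x) := L1 _ _
    _ = op (op x y) (op x y) := C _ _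
end

section
/- In any bounded quasi-implication algebra, the element ((x·y)·(y·x))·x is the least upper bound of {x, y} with respect to the induced partial order x ⪯ y ⟺ x·y = 1. -/
/-- In any bounded quasi-implication algebra, `((x·y)·(y·x))·x` is the least
upper bound of `{x, y}` with respect to the induced order `x ⪯ y ↔ x·y = 1`. -/
theorem bqia_join_is_lub {A : Type*} (op : A → A → A) (zero : A)
    (q1 : ∀ x y : A, op (op x y) x = x)
    (q2 : ∀ x y z : A, op (op x y) (op x z) = op (op y x) (op y z))
    (q3 : ∀ x y : A, op (op (op x y) (op y x)) x = op (op (op y x) (op x y)) y)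
    (hz : ∀ x : A, op zero x = op x x) :
    ∀ r : A → A → Prop, (∀ x y : A, r x y ↔ op x y = op x x) →
      ∀ x y : A,
        r x (op (op (op x y) (op y x)) x) ∧
        r y (op (op (op x y) (op y x)) x) ∧
        (∀ z : A, r x z → r y z → r (op (op (op x y) (op y x)) x) z) := by
  intro r hr x y
  -- basic lemmas
  have A1 : ∀ a b : A, op a (op a b) = op a b := by
    intro a b
    have h := q1 (op a b) a
    rwa [q1 a b] at h
  have A2 : ∀ a b c : A, op (op a b) (op a c) = op a (op (op a b) c) := by
    intro a b c
    have h := q2 (op a b) a c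
    rw [q1 a b, A1 a b] at h
    exact h.symm
  have T : ∀ a b : A, op (op b a) (op b a) = op a a := by
    intro a b
    have h := q2 b a a
    rw [A2 a b a, q1 a b] at h
    exact h
  have sq0 : ∀ a : A, op (op a a) zero = zero := by
    intro a
    have h := q1 zero a
    rwa [hz a] at h
  have DN : ∀ a : A, op (op a zero) zero = a := by
    intro a
    have h := q3 a zero
    rw [hz a] at h
    rw [A2 a zero a, q1 a zero, A2 a a zero, sq0 a, q1 a a] at h
    exact h.symm
  have sq : ∀ a : A, op a a = op zero zero := by
    intro a
    have h := T zero (op a zero)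
    rwa [DN a] at h
  have l1 : ∀ a b : A, op (op a a) b = b := by
    intro a b
    rw [sq a, ← sq b]
    exact q1 b b
  have r1 : ∀ a b : A, op a (op b b) = op b b := by
    intro a b
    rw [sq b, ← sq a]
    exact A1 a a
  have B1 : ∀ a b c : A, op a (op (op a b) c) = op b (op (op b a) c) := by
    intro a b c
    rw [← A2 a b c, q2 a b c, A2 b a c]
  have B2 : ∀ a b : A, op a (op (op a b) (op b a)) = op zero zero := by
    intro a b
    rw [B1 a b (op b a), T a b, sq a, r1 b zero]
  have G3L : ∀ a b : A, op a (op (op (op a b) (op b a)) a) = op zero zero := by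
    intro a b
    have h := B2 a (op (op a b) (op b a))
    rw [B2 a b, l1 zero (op (op (op a b) (op b a)) a)] at h
    exact h
  refine ⟨?_, ?_, ?_⟩
  · refine (hr _ _).mpr ?_
    rw [sq x]
    exact G3L x y
  · refine (hr _ _).mpr ?_
    rw [q3 x y, sq y]
    exact G3L y x
  · intro z hx hy
    have hx' : op x z = op zero zero := by
      rw [← sq x]; exact (hr _ _).mp hx
    have hy' : op y z = op zero zero := by
      rw [← sq y]; exact (hr _ _).mp hy
    refine (hr _ _).mpr ?_
    have C1 : ∀ w, op x w = op (op z x) (op z w) := by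
      intro w
      have h := q2 x z w
      rwa [hx', l1 zero (op x w)] at h
    have C2 : ∀ w, op z (op x w) = op x w := by
      intro w
      calc op z (op x w) = op z (op (op z x) (op z w)) := by rw [← C1 w]
        _ = op (op z x) (op z (op z w)) := (A2 z x (op z w)).symm
        _ = op (op z x) (op z w) := by rw [A1 z w]
        _ = op x w := (C1 w).symm
    have C3 : ∀ w, op (op x w) z = z := by
      intro w
      have h := q1 z (op x w)
      rwa [C2 w] at h
    have D1 : ∀ u, op (op u x) (op u z) = op zero zero := by
      intro u
      have h := q2 x u z
      rw [hx', r1 (op x u) zero] at h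
      exact h.symm
    have D2 : ∀ v, op (op (op z v) x) z = op zero zero := by
      intro v
      have h := D1 (op z v)
      rwa [q1 z v] at h
    have D4 : ∀ w v, op (op (op (op x w) (op z v)) x) z = op zero zero := by
      intro w v
      have h := D2 (op (op z (op x w)) v)
      rw [B1 z (op x w) v] at h
      rwa [C3 w] at h
    have h := D4 y (op (op z y) x)
    rw [B1 z y x] at h
    rw [hy'] at h
    rw [l1 zero x] at h
    rw [sq (op (op (op x y) (op y x)) x)]
    exact h
end

section
/- Let A be an I-dimensional quantum cylindric algebra. Then ⟨A; π_s, 0, (∃_i)_{i∈I}, (δ_{i,k})_{i,k∈I}⟩, where π_s(x,y) = x^⊥ ∨ (x ∧ y), is an I-dimensional cylindric quasi-implication algebra; in particular, for i,l ≠ k, ∃_k(π_s(π_s(π_s(δ_{i,k},δ_{k,l}), π_s(δ_{i,k},0)),0)) = δ_{i,l}. -/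
section Aux
variable {A : Type*} [Lattice A] [BoundedOrder A]
variable (c : A → A)
variable (hinf : ∀ x : A, x ⊓ c x = ⊥) (hsup : ∀ x : A, x ⊔ c x = ⊤)
variable (hanti : ∀ x y : A, x ≤ y → c y ≤ c x) (hinv : ∀ x : A, c (c x) = x)
variable (hom : ∀ x y : A, x ≤ y → y = x ⊔ (c x ⊓ y))

set_option linter.unusedSectionVars false
include hinf hanti hinv hom

lemma qca_dm_sup (x y : A) : c (x ⊔ y) = c x ⊓ c y := by
  apply le_antisymm
  · exact le_inf (hanti _ _ le_sup_left) (hanti _ _ le_sup_right)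
  · have h : x ⊔ y ≤ c (c x ⊓ c y) := by
      apply sup_le
      · have h2 : c (c x) ≤ c (c x ⊓ c y) := hanti _ _ inf_le_left
        rwa [hinv] at h2
      · have h2 : c (c y) ≤ c (c x ⊓ c y) := hanti _ _ inf_le_right
        rwa [hinv] at h2
    have := hanti _ _ h
    rwa [hinv] at this

lemma qca_dm_inf (x y : A) : c (x ⊓ y) = c x ⊔ c y := by
  have := qca_dm_sup c hinf hanti hinv hom (c x) (c y)
  rw [hinv, hinv] at this
  rw [← this, hinv]

lemma qca_A {m x : A} (hm : m ≤ x) : x ⊓ (c x ⊔ m) = m := by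
  set t := x ⊓ (c x ⊔ m) with ht
  have hmt : m ≤ t := le_inf hm le_sup_right
  have hbot : c m ⊓ t = ⊥ := by
    apply le_antisymm _ bot_le
    have h1 : c m ⊓ t ≤ (c x ⊔ m) ⊓ c (c x ⊔ m) := by
      apply le_inf
      · exact le_trans inf_le_right inf_le_right
      · rw [qca_dm_sup c hinf hanti hinv hom, hinv]
        exact le_inf (le_trans inf_le_right inf_le_left) inf_le_left
    rw [hinf] at h1; exact h1
  have h2 := hom m t hmt
  rw [hbot, sup_bot_eq] at h2
  exact h2

lemma qca_B {p q x : A} (hp : p ≤ x) (hq : q ≤ x) :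
    (c x ⊔ p) ⊓ (c x ⊔ q) = c x ⊔ (p ⊓ q) := by
  set t := (c x ⊔ p) ⊓ (c x ⊔ q) with ht
  set m := c x ⊔ (p ⊓ q) with hm
  have hmt : m ≤ t :=
    sup_le (le_inf le_sup_left le_sup_left)
      (le_inf (le_trans inf_le_left le_sup_right) (le_trans inf_le_right le_sup_right))
  have hcm : c m = x ⊓ c (p ⊓ q) := by
    rw [hm, qca_dm_sup c hinf hanti hinv hom, hinv]
  have hcmx : c m ≤ x := by rw [hcm]; exact inf_le_left
  have hbot : c m ⊓ t = ⊥ := by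
    apply le_antisymm _ bot_le
    have h1 : c m ⊓ t ≤ p := by
      rw [← qca_A c hinf hanti hinv hom hp]
      exact le_inf (le_trans inf_le_left hcmx) (le_trans inf_le_right inf_le_left)
    have h2 : c m ⊓ t ≤ q := by
      rw [← qca_A c hinf hanti hinv hom hq]
      exact le_inf (le_trans inf_le_left hcmx) (le_trans inf_le_right inf_le_right)
    have h3 : c m ⊓ t ≤ (p ⊓ q) ⊓ c (p ⊓ q) :=
      le_inf (le_inf h1 h2) (le_trans inf_le_left (by rw [hcm]; exact inf_le_right))
    rw [hinf] at h3; exact h3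
  have h2 := hom m t hmt
  rw [hbot, sup_bot_eq] at h2
  exact h2

lemma qca_C {a b u : A} (ha : u ≤ c a) (hb : u ≤ c b) :
    (a ⊔ u) ⊓ (b ⊔ u) = (a ⊓ b) ⊔ u := by
  set t := (a ⊔ u) ⊓ (b ⊔ u) with ht
  set m := (a ⊓ b) ⊔ u with hm
  have hmt : m ≤ t :=
    sup_le (le_inf (le_trans inf_le_left le_sup_left) (le_trans inf_le_right le_sup_left))
      (le_inf le_sup_right le_sup_right)
  have hca : a ≤ c u := by rw [← hinv a]; exact hanti _ _ ha
  have hcb : b ≤ c u := by rw [← hinv b]; exact hanti _ _ hb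
  have hcm : c m = c (a ⊓ b) ⊓ c u := by rw [hm, qca_dm_sup c hinf hanti hinv hom]
  have hbot : c m ⊓ t = ⊥ := by
    apply le_antisymm _ bot_le
    have key : ∀ w : A, w ≤ c u → c u ⊓ (w ⊔ u) = w := by
      intro w hw
      have := qca_A c hinf hanti hinv hom hw  -- c u ⊓ (c (c u) ⊔ w) = w
      rw [hinv] at this
      rw [sup_comm]; exact this
    have h1 : c m ⊓ t ≤ a := by
      rw [← key a hca]
      exact le_inf (le_trans inf_le_left (by rw [hcm]; exact inf_le_right))
        (le_trans inf_le_right inf_le_left)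
    have h2 : c m ⊓ t ≤ b := by
      rw [← key b hcb]
      exact le_inf (le_trans inf_le_left (by rw [hcm]; exact inf_le_right))
        (le_trans inf_le_right inf_le_right)
    have h3 : c m ⊓ t ≤ (a ⊓ b) ⊓ c (a ⊓ b) :=
      le_inf (le_inf h1 h2) (le_trans inf_le_left (by rw [hcm]; exact inf_le_left))
    rw [hinf] at h3; exact h3
  have h2 := hom m t hmt
  rw [hbot, sup_bot_eq] at h2
  exact h2
end Aux



/-- If `A` is an `I`-dimensional quantum cylindric algebra, then
`⟨A; π_s, 0, (∃_i), (δ_{i,k})⟩` with `π_s(x,y) = xᶜ ⊔ (x ⊓ y)` is an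
`I`-dimensional cylindric quasi-implication algebra; in particular, for
`i, l ≠ k`, `∃_k(π_s(π_s(π_s(δ_{i,k},δ_{k,l}), π_s(δ_{i,k},0)),0)) = δ_{i,l}`. -/
theorem qca_to_cqia {A : Type*} [Lattice A] [BoundedOrder A] {I : Type*}
    (c : A → A)
    (hinf : ∀ x : A, x ⊓ c x = ⊥) (hsup : ∀ x : A, x ⊔ c x = ⊤)
    (hanti : ∀ x y : A, x ≤ y → c y ≤ c x) (hinv : ∀ x : A, c (c x) = x)
    (hom : ∀ x y : A, x ≤ y → y = x ⊔ (c x ⊓ y))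
    (E : I → A → A)
    (hE0 : ∀ i, E i ⊥ = ⊥)
    (hEle : ∀ i (x : A), x ≤ E i x)
    (hEsup : ∀ i (x y : A), E i (x ⊔ y) = E i x ⊔ E i y)
    (hEE : ∀ i (x : A), E i (E i x) = E i x)
    (hEperp : ∀ i (x : A), E i (c (E i x)) = c (E i x))
    (hcomm : ∀ i k (x : A), E i (E k x) = E k (E i x))
    (d : I → I → A)
    (hdsym : ∀ i k, d i k = d k i)
    (hdrefl : ∀ i, d i i = ⊤)
    (hdiag : ∀ i k l, i ≠ k → l ≠ k → E k (d i k ⊓ d k l) = d i l) :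
    ∀ s : A → A → A, (∀ x y : A, s x y = c x ⊔ (x ⊓ y)) →
      -- `⟨A; s, ⊥⟩` is a bounded quasi-implication algebra
      (∀ x y : A, s (s x y) x = x) ∧
      (∀ x y z : A, s (s x y) (s x z) = s (s y x) (s y z)) ∧
      (∀ x y : A, s (s (s x y) (s y x)) x = s (s (s y x) (s x y)) y) ∧
      (∀ x : A, s ⊥ x = ⊤) ∧
      -- each `E i` is a quantifier in the quasi-implicational sense
      (∀ i (x : A), s (E i (E i x)) (E i x) = ⊤) ∧
      (∀ i (x : A), s x (E i x) = ⊤) ∧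
      (∀ i (x : A), E i (s (E i x) ⊥) = s (E i x) ⊥) ∧
      (∀ i, E i (⊥ : A) = ⊥) ∧
      (∀ i (x y : A), E i (s (s (s x ⊥) (s y ⊥)) x)
        = s (s (s (E i x) ⊥) (s (E i y) ⊥)) (E i x)) ∧
      -- the quantifiers pairwise commute
      (∀ i k (x : A), E i (E k x) = E k (E i x)) ∧
      -- diagonal conditions
      (∀ i k, d i k = d k i) ∧
      (∀ i, d i i = ⊤) ∧
      (∀ i k l, i ≠ k → l ≠ k →
        E k (s (s (s (d i k) (d k l)) (s (d i k) ⊥)) ⊥) = d i l) := by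
  intro s hs
  -- basic facts
  have hcbot : c (⊥ : A) = ⊤ := by
    have := hsup (⊥ : A); rwa [bot_sup_eq] at this
  have hsbot : ∀ x : A, s x ⊥ = c x := by
    intro x; rw [hs, inf_bot_eq, sup_bot_eq]
  have hstop : ∀ x : A, s x x = ⊤ := by
    intro x; rw [hs, inf_idem, sup_comm]; exact hsup x
  have hcs : ∀ x y : A, c (c x ⊔ (x ⊓ y)) = x ⊓ c (x ⊓ y) := by
    intro x y; rw [qca_dm_sup c hinf hanti hinv hom, hinv]
  have homc : ∀ x y : A, c x ⊔ (x ⊓ c (x ⊓ y)) = c (x ⊓ y) := by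
    intro x y
    have h := hom (c x) (c (x ⊓ y)) (hanti _ _ inf_le_left)
    rw [hinv] at h; exact h.symm
  have homx : ∀ x y : A, (x ⊓ c (x ⊓ y)) ⊔ (x ⊓ y) = x := by
    intro x y
    have hx := hom (x ⊓ y) x inf_le_left
    rw [inf_comm (c (x ⊓ y)) x] at hx
    rw [sup_comm] at hx
    exact hx.symm
  -- part 1
  have part1 : ∀ x y : A, s (s x y) x = x := by
    intro x y
    rw [hs (s x y) x, hs x y, hcs]
    rw [inf_comm (c x ⊔ (x ⊓ y)) x, qca_A c hinf hanti hinv hom inf_le_left]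
    exact homx x y
  -- part 2
  have lem2 : ∀ x y z : A, s (s x y) (s x z) = c (x ⊓ y) ⊔ ((x ⊓ y) ⊓ z) := by
    intro x y z
    rw [hs (s x y) (s x z), hs x y, hs x z, hcs,
      qca_B c hinf hanti hinv hom inf_le_left inf_le_left,
      ← inf_assoc, inf_of_le_left (inf_le_left : x ⊓ y ≤ x),
      ← sup_assoc, sup_comm (x ⊓ c (x ⊓ y)) (c x), homc]
  have part2 : ∀ x y z : A, s (s x y) (s x z) = s (s y x) (s y z) := by
    intro x y z
    rw [lem2, lem2, inf_comm y x]
  -- part 3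
  have lem3b : ∀ x y : A, s (x ⊔ c (x ⊔ y)) x = x ⊔ y := by
    intro x y
    rw [hs, qca_dm_sup c hinf hanti hinv hom, hinv,
      inf_of_le_right (le_sup_left : x ≤ x ⊔ c (x ⊔ y)), sup_comm]
    exact (hom x (x ⊔ y) le_sup_left).symm
  have lem3a : ∀ x y : A, s (s x y) (s y x) = x ⊔ c (x ⊔ y) := by
    intro x y
    rw [hs (s x y) (s y x), hs x y, hs y x, hcs, inf_comm y x]
    have hC := qca_C c hinf hanti hinv hom
      (show x ⊓ y ≤ c (c x) by rw [hinv]; exact inf_le_left)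
      (show x ⊓ y ≤ c (c y) by rw [hinv]; exact inf_le_right)
    rw [hC, sup_comm (c x ⊓ c y) (x ⊓ y), ← sup_assoc, homx,
      qca_dm_sup c hinf hanti hinv hom]
  have part3 : ∀ x y : A, s (s (s x y) (s y x)) x = s (s (s y x) (s x y)) y := by
    intro x y
    rw [lem3a x y, lem3a y x, lem3b x y, lem3b y x, sup_comm x y]
  -- part 4
  have part4 : ∀ x : A, s ⊥ x = ⊤ := by
    intro x; rw [hs, hcbot, top_sup_eq]
  -- part 9 helper
  have h9 : ∀ u v : A, s (s (s u ⊥) (s v ⊥)) u = u ⊔ v := by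
    intro u v
    rw [hsbot, hsbot]
    have e : s (c u) (c v) = u ⊔ c (u ⊔ v) := by
      rw [hs, hinv, ← qca_dm_sup c hinf hanti hinv hom]
    rw [e, lem3b]
  refine ⟨part1, part2, part3, part4, ?_, ?_, ?_, hE0, ?_, hcomm, hdsym, hdrefl, ?_⟩
  · intro i x; rw [hEE, hstop]
  · intro i x; rw [hs, inf_of_le_left (hEle i x), sup_comm]; exact hsup x
  · intro i x; rw [hsbot]; exact hEperp i x
  · intro i x y; rw [h9, h9, hEsup]
  · intro i k l hik hlk
    have inner : s (s (d i k) (d k l)) (s (d i k) ⊥) = c (d i k ⊓ d k l) := by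
      rw [hsbot, hs (s (d i k) (d k l)) (c (d i k)), hs, hcs,
        inf_of_le_right (le_sup_left : c (d i k) ≤ c (d i k) ⊔ (d i k ⊓ d k l)),
        sup_comm]
      exact homc _ _
    rw [inner, hsbot, hinv]
    exact hdiag i k l hik hlk
end

section
/- Let A be a bounded quasi-implication algebra and for x ∈ A let ψ(x) = {y ∈ A \ {0} : y·x = 1}. With the orthogonality relation y ⊥ z ⟺ y·(z·0) = 1 on A \ {0}, the following hold: ψ(x) ∩ ψ(y) = ψ(((x·y)·(x·0))·0) and ψ(x·0) = ψ(x)^⊥, where U^⊥ = {w : w ⊥ u for all u ∈ U}. -/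
/-- Let `A` be a bounded quasi-implication algebra and, for `x ∈ A`, let
`ψ(x) = {y ∈ A \ {0} : y·x = 1}`.  With the orthogonality relation
`y ⊥ z ↔ y·(z·0) = 1` on `A \ {0}`, we have
`ψ(x) ∩ ψ(y) = ψ(((x·y)·(x·0))·0)` and `ψ(x·0) = ψ(x)ᗮ`. -/
theorem bqia_psi_meet_and_perp {A : Type*} (op : A → A → A) (zero : A)
    (q1 : ∀ x y : A, op (op x y) x = x)
    (q2 : ∀ x y z : A, op (op x y) (op x z) = op (op y x) (op y z))
    (q3 : ∀ x y : A, op (op (op x y) (op y x)) x = op (op (op y x) (op x y)) y)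
    (hz : ∀ x : A, op zero x = op x x) :
    ∀ ψ : A → Set A,
      (∀ x : A, ψ x = {y : A | y ≠ zero ∧ op y x = op zero zero}) →
    ∀ perp : Set A → Set A,
      (∀ U : Set A, perp U =
        {w : A | w ≠ zero ∧ ∀ u ∈ U, op w (op u zero) = op zero zero}) →
      (∀ x y : A, ψ x ∩ ψ y = ψ (op (op (op x y) (op x zero)) zero)) ∧
      (∀ x : A, ψ (op x zero) = perp (ψ x)) := by
  intro ψ hψ perp hperp
  -- D1 : x·(x·y) = x·y
  have d1 : ∀ x y : A, op x (op x y) = op x y := by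
    intro x y
    have h := q1 (op x y) x
    rw [q1 x y] at h
    exact h
  have eab : ∀ a b : A, op (op a b) (op a b) = op (op b a) (op b b) := fun a b => q2 a b b
  -- D3 : (x·y)·(x·x) = x·x
  have d3 : ∀ x y : A, op (op x y) (op x x) = op x x := by
    intro x y
    have h := eab (op x y) x
    rw [q1 x y, d1 x y] at h
    exact h.symm
  -- D9 : (x·(x·0))·(x·0) = x·x
  have d9 : ∀ x : A, op (op x (op x zero)) (op x zero) = op x x := by
    intro x
    have h := q3 x (op x zero)
    rw [q1 x zero, q1 x (op x zero), d1 x (op x zero)] at h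
    exact h.symm
  -- D10 : x·((x·0)·0) = (x·0)·(x·0)
  have d10 : ∀ x : A, op x (op (op x zero) zero) = op (op x zero) (op x zero) := by
    intro x
    have h := q2 x (op x zero) zero
    rw [d1 x zero, q1 x zero] at h
    exact h.symm
  -- x·x is constant
  have econst : ∀ x : A, op x x = op zero zero := by
    intro x
    have h := q2 (op x zero) x zero
    rw [q1 x zero, d9 x, d10 x] at h
    have h2 := eab x zero
    rw [hz x] at h2
    have h3 := d3 zero x
    rw [hz x] at h3
    rw [h2, h3] at h
    exact h.symm
  have one_mul : ∀ x : A, op (op zero zero) x = x := by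
    intro x
    have h := q1 x x
    rw [econst x] at h
    exact h
  have mul_one : ∀ x : A, op x (op zero zero) = op zero zero := by
    intro x
    have h := q1 (op zero zero) x
    rw [one_mul x] at h
    exact h
  -- double negation
  have dneg : ∀ x : A, op (op x zero) zero = x := by
    intro x
    have h := q3 x zero
    rw [hz x, econst x, mul_one (op x zero), one_mul x, one_mul (op x zero)] at h
    exact h.symm
  have d13 : ∀ a b w : A, op a b = op zero zero → op a w = op (op b a) (op b w) := by
    intro a b w hab
    have h := q2 a b w
    rw [hab, one_mul] at h
    exact h
  have trans : ∀ a b c : A, op a b = op zero zero → op b c = op zero zero →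
      op a c = op zero zero := by
    intro a b c hab hbc
    rw [d13 a b c hab, hbc, mul_one]
  -- D15 : (x·0)·(x·y) = 1
  have d15 : ∀ x y : A, op (op x zero) (op x y) = op zero zero := by
    intro x y
    have h := q2 x zero y
    rw [hz x, hz y, econst x, econst y, one_mul] at h
    exact h
  have absorb : ∀ a b : A, op a b = op zero zero → op a (op b a) = op zero zero := by
    intro a b hab
    rw [d13 a b (op b a) hab, d1 b a, econst (op b a)]
  have contrapos : ∀ x y : A, op y x = op zero zero →
      op (op x zero) (op y zero) = op zero zero := by
    intro x y hyx
    have h := q2 y x zero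
    rw [hyx, one_mul] at h
    rw [h]
    exact absorb (op x zero) (op x y) (d15 x y)
  -- key lemma: z ≤ u → u·z' = z'
  have lemE : ∀ z u : A, op z u = op zero zero → op u (op z zero) = op z zero := by
    intro z u hzu
    have hdc : op (op u zero) (op z zero) = op zero zero := contrapos u z hzu
    have hu : u = op (op (op z zero) (op u zero)) (op (op z zero) zero) := by
      have h := d13 (op u zero) (op z zero) zero hdc
      rw [dneg u] at h
      exact h
    have hq := q2 (op (op z zero) (op u zero)) (op (op z zero) zero) (op z zero)
    rw [q1 (op z zero) (op u zero), q1 (op z zero) zero,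
      d15 (op z zero) (op u zero), one_mul] at hq
    rw [hu]
    exact hq
  have lemG : ∀ z x y : A, op z x = op zero zero → op z y = op zero zero →
      op z (op x y) = op zero zero := by
    intro z x y hzx hzy
    have h := d13 z x (op x y) hzx
    rw [d1 x y] at h
    rw [h, q2 x z y, hzx, one_mul, hzy]
  -- the meet element c = ((x·y)·(x·0))·0 satisfies c ≤ x, c ≤ y
  have hmx : ∀ x y : A, op (op (op (op x y) (op x zero)) zero) x = op zero zero := by
    intro x y
    have h1 : op (op x zero) (op (op x y) (op x zero)) = op zero zero :=
      absorb (op x zero) (op x y) (d15 x y)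
    have h2 := contrapos (op (op x y) (op x zero)) (op x zero) h1
    rw [dneg x] at h2
    exact h2
  have hmy : ∀ x y : A, op (op (op (op x y) (op x zero)) zero) y = op zero zero := by
    intro x y
    have hsym := q2 x y zero
    have h1 : op (op y zero) (op (op x y) (op x zero)) = op zero zero := by
      rw [hsym]
      exact absorb (op y zero) (op y x) (d15 y x)
    have h2 := contrapos (op (op x y) (op x zero)) (op y zero) h1
    rw [dneg y] at h2
    exact h2
  -- z ≤ x, z ≤ y → z ≤ c
  have hmz : ∀ x y z : A, op z x = op zero zero → op z y = op zero zero →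
      op z (op (op (op x y) (op x zero)) zero) = op zero zero := by
    intro x y z hzx hzy
    have hg : op z (op x y) = op zero zero := lemG z x y hzx hzy
    have hE : op (op x y) (op z zero) = op z zero := lemE z (op x y) hg
    have d16 := q2 (op x y) (op x zero) (op z zero)
    rw [d15 x y, one_mul, hE] at d16
    rw [contrapos x z hzx] at d16
    have h2 := contrapos (op z zero) (op (op x y) (op x zero)) d16
    rw [dneg z] at h2
    exact h2
  constructor
  · intro x y
    ext w
    simp only [hψ, Set.mem_inter_iff, Set.mem_setOf_eq]
    constructor
    · rintro ⟨⟨hw0, hwx⟩, _, hwy⟩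
      exact ⟨hw0, hmz x y w hwx hwy⟩
    · rintro ⟨hw0, hwc⟩
      exact ⟨⟨hw0, trans w _ x hwc (hmx x y)⟩, hw0, trans w _ y hwc (hmy x y)⟩
  · intro x
    ext w
    simp only [hψ, hperp, Set.mem_setOf_eq]
    constructor
    · rintro ⟨hw0, hwx'⟩
      refine ⟨hw0, ?_⟩
      rintro u ⟨hu0, hux⟩
      exact trans w (op x zero) (op u zero) hwx' (contrapos x u hux)
    · rintro ⟨hw0, hall⟩
      refine ⟨hw0, ?_⟩
      by_cases hx : x = zero
      · rw [hx]
        exact mul_one w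
      · exact hall x ⟨hx, econst x⟩
end
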